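/- arXiv:2507.20176 — 2 statements merged into one kernel-verified Lean document; each statement's English description precedes it below -/
import Mathlib

section
/- Let (H, ·, ∘) be a Hopf brace and define g⇀h := S(g₍₁₎)·(g₍₂₎∘h). Then ⇀ makes H into a left module algebra over the Hopf algebra (H, ∘): namely 1⇀h = h, g⇀(h⇀ℓ) = (g∘h)⇀ℓ, g⇀1 = ε(g)1, and g⇀(h·k) = (g₍₁₎⇀h)·(g₍₂₎⇀k) for all g,h,k,ℓ ∈ H. -/
open scoped TensorProduct
open Coalgebra

variable (R H : Type*) [CommRing R] [AddCommGroup H] [Module R H] [Coalgebra R H]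

/-- A Hopf algebra structure (multiplication, unit, antipode) on the coalgebra `H`:
the multiplication is associative with unit, comultiplication and counit are algebra
maps, and `S` is an antipode (expressed via arbitrary Sweedler representations). -/
structure HopfMul where
  mul : H →ₗ[R] H →ₗ[R] H
  one : H
  S : H →ₗ[R] H
  mul_assoc : ∀ a b c : H, mul (mul a b) c = mul a (mul b c)
  one_mul : ∀ a : H, mul one a = a
  mul_one : ∀ a : H, mul a one = a
  comul_mul : ∀ (a b : H) {ι κ : Type*} (ra : Coalgebra.Repr R a ι) (rb : Coalgebra.Repr R b κ),
    comul (R := R) (mul a b) = ∑ i ∈ ra.index, ∑ j ∈ rb.index,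
      mul (ra.left i) (rb.left j) ⊗ₜ[R] mul (ra.right i) (rb.right j)
  comul_one : comul (R := R) one = one ⊗ₜ[R] one
  counit_mul : ∀ a b : H, counit (R := R) (mul a b) = counit (R := R) a * counit (R := R) b
  counit_one : counit (R := R) one = 1
  S_mul_left : ∀ (a : H) {ι : Type*} (r : Coalgebra.Repr R a ι),
    ∑ i ∈ r.index, mul (S (r.left i)) (r.right i) = counit (R := R) a • one
  S_mul_right : ∀ (a : H) {ι : Type*} (r : Coalgebra.Repr R a ι),
    ∑ i ∈ r.index, mul (r.left i) (S (r.right i)) = counit (R := R) a • one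

universe d₁ d₂ d₃ d₄ c₁ c₂ c₃ c₄

/-- A Hopf brace: two Hopf algebra structures `dot` (written `·`) and `circ` (written `∘`)
on the same coalgebra `H`, satisfying `g∘(h·ℓ) = (g₍₁₎∘h)·S(g₍₂₎)·(g₍₃₎∘ℓ)`. -/
structure HopfBrace where
  dot : HopfMul.{_, _, d₁, d₂, d₃, d₄} R H
  circ : HopfMul.{_, _, c₁, c₂, c₃, c₄} R H
  compat : ∀ (g h ℓ : H) {ι : Type*} (r : Coalgebra.Repr R g ι) {κ : ι → Type*}
      (r2 : ∀ i : ι, Coalgebra.Repr R (r.right i) (κ i)),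
    circ.mul g (dot.mul h ℓ) = ∑ i ∈ r.index, ∑ j ∈ (r2 i).index,
      dot.mul (dot.mul (circ.mul (r.left i) h) (dot.S ((r2 i).left j)))
        (circ.mul ((r2 i).right j) ℓ)

/-!
Write `g ⇀ h` for `S(g₁)·(g₂∘h)`. The brace identity becomes `g∘(h·ℓ) = (g₁∘h)·(g₂⇀ℓ)`, and the
antipode axiom turns `⇀` back into `∘`: `g∘h = g₁·(g₂⇀h)`. Together they give the module-algebra
law and `g∘(h∘ℓ) = (g₁∘h₁)·(g₂⇀(h₂⇀ℓ))`. Substituting this into `(g∘h)⇀ℓ = S((g∘h)₁)·((g∘h)₂∘ℓ)`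
leaves a cancellation `S(x₁)·x₂ = ε(x)` in the coalgebra `H ⊗ H`, pulled along the coalgebra map
`g ⊗ h ↦ g∘h`. The two units agree because the brace identity at `g = h = ℓ = 1` forces
`S(1∘) = 1·`.
-/

variable {R H}

namespace Coalgebra

universe w

variable {k A M : Type*} [CommSemiring k] [AddCommMonoid A] [Module k A] [AddCommMonoid M]

section CoalgebraStruct

variable [CoalgebraStruct k A] {a : A} {ι : Type*}

def Repr.single {x y : A} (h : comul (R := k) a = x ⊗ₜ[k] y) : Repr k a PUnit.{w + 1} where
  index := {PUnit.unit}
  left _ := x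
  right _ := y
  eq := by rw [Finset.sum_singleton, h]

/-- The axioms of `HopfMul` and `HopfBrace` quantify over index types in fixed universes; this
copy of `r` lets them be applied to any representation. -/
noncomputable def Repr.uliftFin (r : Repr k a ι) : Repr k a (ULift.{w} (Fin r.index.card)) where
  index := Finset.univ
  left i := r.left (r.index.equivFin.symm i.down)
  right i := r.right (r.index.equivFin.symm i.down)
  eq := by
    rw [← r.eq, ← Finset.sum_coe_sort r.index]
    exact Fintype.sum_equiv (Equiv.ulift.trans r.index.equivFin.symm) _ _ fun _ => rfl

theorem Repr.sum_uliftFin (r : Repr k a ι) (F : A → A → M) :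
    ∑ i ∈ (r.uliftFin.{w}).index, F (r.uliftFin.left i) (r.uliftFin.right i) =
      ∑ i ∈ r.index, F (r.left i) (r.right i) := by
  rw [← Finset.sum_coe_sort r.index]
  exact Fintype.sum_equiv (Equiv.ulift.trans r.index.equivFin.symm) _ _ fun _ => rfl

/-- Unlike `Coalgebra.Repr.tmul`, no bialgebra structure is needed. -/
@[simps]
def Repr.tensor {B : Type*} [AddCommMonoid B] [Module k B] [CoalgebraStruct k B] {b : B}
    {κ : Type*} (ra : Repr k a ι) (rb : Repr k b κ) : Repr k (a ⊗ₜ[k] b) (ι × κ) where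
  index := ra.index ×ˢ rb.index
  left p := ra.left p.1 ⊗ₜ rb.left p.2
  right p := ra.right p.1 ⊗ₜ rb.right p.2
  eq := by
    simp [← ra.eq, ← rb.eq, TensorProduct.sum_tmul, TensorProduct.tmul_sum, Finset.sum_product,
      Finset.sum_comm (s := rb.index)]

end CoalgebraStruct

variable [Module k M] [Coalgebra k A] {a : A} {ι : Type*} {κ Λ : ι → Type*}

theorem sum_sum_trilinear_eq (T : A →ₗ[k] A →ₗ[k] A →ₗ[k] M)
    (r : Repr k a ι) (r₁ : ∀ i, Repr k (r.left i) (κ i)) (r₂ : ∀ i, Repr k (r.right i) (Λ i)) :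
    ∑ i ∈ r.index, ∑ j ∈ (r₁ i).index, T ((r₁ i).left j) ((r₁ i).right j) (r.right i) =
      ∑ i ∈ r.index, ∑ j ∈ (r₂ i).index, T (r.left i) ((r₂ i).left j) ((r₂ i).right j) := by
  simpa [map_sum] using congr(TensorProduct.lift
    (TensorProduct.uncurry (RingHom.id k) A A M ∘ₗ T) $(sum_tmul_tmul_eq r r₁ r₂))

end Coalgebra

namespace HopfMul

variable (m : HopfMul R H) {a : H} {ι : Type*}

theorem sum_S_mul (r : Repr R a ι) :
    ∑ i ∈ r.index, m.mul (m.S (r.left i)) (r.right i) = counit (R := R) a • m.one :=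
  (r.sum_uliftFin fun x y => m.mul (m.S x) y).symm.trans (m.S_mul_left a r.uliftFin)

theorem sum_mul_S (r : Repr R a ι) :
    ∑ i ∈ r.index, m.mul (r.left i) (m.S (r.right i)) = counit (R := R) a • m.one :=
  (r.sum_uliftFin fun x y => m.mul x (m.S y)).symm.trans (m.S_mul_right a r.uliftFin)

noncomputable def mulCoalgHom : H ⊗[R] H →ₗc[R] H where
  toLinearMap := TensorProduct.lift m.mul
  counit_comp := by
    ext a b
    simpa [mul_comm] using m.counit_mul a b
  map_comp_comul := by
    refine TensorProduct.ext' fun a b => ?_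
    set ra := (ℛ R a).uliftFin
    set rb := (ℛ R b).uliftFin
    have hm : comul (R := R) (m.mul a b) = ∑ i ∈ (ℛ R a).index, ∑ j ∈ (ℛ R b).index,
        m.mul ((ℛ R a).left i) ((ℛ R b).left j) ⊗ₜ[R] m.mul ((ℛ R a).right i) ((ℛ R b).right j) :=
      calc comul (R := R) (m.mul a b)
          = ∑ i ∈ ra.index, ∑ j ∈ rb.index,
              m.mul (ra.left i) (rb.left j) ⊗ₜ[R] m.mul (ra.right i) (rb.right j) :=
            m.comul_mul a b ra rb
        _ = ∑ i ∈ ra.index, ∑ j ∈ (ℛ R b).index,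
              m.mul (ra.left i) ((ℛ R b).left j) ⊗ₜ[R] m.mul (ra.right i) ((ℛ R b).right j) :=
            Finset.sum_congr rfl fun i _ =>
              (ℛ R b).sum_uliftFin fun x y => m.mul (ra.left i) x ⊗ₜ[R] m.mul (ra.right i) y
        _ = _ := (ℛ R a).sum_uliftFin fun x y => ∑ j ∈ (ℛ R b).index,
              m.mul x ((ℛ R b).left j) ⊗ₜ[R] m.mul y ((ℛ R b).right j)
    simp only [LinearMap.comp_apply, TensorProduct.lift.tmul, hm]
    simp [← ((ℛ R a).tensor (ℛ R b)).eq, map_sum, Finset.sum_product]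

@[simp]
theorem mulCoalgHom_tmul (a b : H) : m.mulCoalgHom (a ⊗ₜ b) = m.mul a b :=
  TensorProduct.lift.tmul a b

theorem sum_S_mul_sum_mul_cancel {C : Type*} [AddCommMonoid C] [Module R C] [Coalgebra R C]
    (φ : C →ₗc[R] H) (X : C →ₗ[R] H) {t : C} {κ : ι → Type*} (r : Repr R t ι) (r₂ : ∀ i, Repr R (r.right i) (κ i)) :
    ∑ i ∈ r.index, m.mul (m.S (φ (r.left i)))
      (∑ j ∈ (r₂ i).index, m.mul (φ ((r₂ i).left j)) (X ((r₂ i).right j))) = X t := by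
  let T : C →ₗ[R] C →ₗ[R] C →ₗ[R] H := (LinearMap.llcomp R C H H).compl₁₂
    (m.mul ∘ₗ m.S ∘ₗ (φ : C →ₗ[R] H)) ((m.mul ∘ₗ (φ : C →ₗ[R] H)).compl₂ X)
  calc _ = ∑ i ∈ r.index, ∑ j ∈ (r₂ i).index,
          T (r.left i) ((r₂ i).left j) ((r₂ i).right j) := by
        simp [T, map_sum]
    _ = ∑ i ∈ r.index, ∑ j ∈ (ℛ R (r.left i)).index,
          T ((ℛ R (r.left i)).left j) ((ℛ R (r.left i)).right j) (r.right i) :=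
        (sum_sum_trilinear_eq T r _ _).symm
    _ = ∑ i ∈ r.index, counit (R := R) (r.left i) • X (r.right i) := by
        refine Finset.sum_congr rfl fun i _ => ?_
        have hS := m.sum_S_mul ((ℛ R (r.left i)).induced φ)
        simp only [Repr.induced_index, Repr.induced_left, Repr.induced_right, Function.comp_apply,
          CoalgHomClass.counit_comp_apply] at hS
        simp only [T, LinearMap.compl₁₂_apply, LinearMap.llcomp_apply, LinearMap.coe_comp,
          Function.comp_apply, LinearMap.compl₂_apply, CoalgHom.coe_toLinearMap, ← m.mul_assoc]
        rw [← LinearMap.sum_apply, ← map_sum, hS, map_smul, LinearMap.smul_apply, m.one_mul]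
    _ = X t := by
        simpa [map_sum] using congr(X $(sum_counit_smul r))

end HopfMul

namespace HopfBrace

variable (Br : HopfBrace R H) {ι : Type*}

noncomputable def act : H →ₗ[R] H →ₗ[R] H :=
  TensorProduct.lift ((LinearMap.llcomp R H H H).compl₁₂ (Br.dot.mul ∘ₗ Br.dot.S) Br.circ.mul) ∘ₗ
    comul

theorem act_eq_sum {g : H} (r : Repr R g ι) (h : H) :
    Br.act g h = ∑ i ∈ r.index, Br.dot.mul (Br.dot.S (r.left i)) (Br.circ.mul (r.right i) h) := by
  simp [act, ← r.eq, map_sum]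

theorem dot_S_circ_one : Br.dot.S Br.circ.one = Br.dot.one := by
  simpa [Repr.single, Br.dot.mul_one, Br.dot.one_mul, Br.circ.one_mul] using
    (Br.compat Br.circ.one Br.dot.one Br.dot.one (.single Br.circ.comul_one)
      fun _ => .single Br.circ.comul_one).symm

theorem circ_one_eq_dot_one : Br.circ.one = Br.dot.one := by
  simpa [Repr.single, dot_S_circ_one, Br.dot.one_mul, Br.circ.counit_one] using
    Br.dot.S_mul_left Br.circ.one (.single Br.circ.comul_one)

theorem act_circ_one (h : H) : Br.act Br.circ.one h = h := by
  rw [Br.act_eq_sum (Repr.single.{0} Br.circ.comul_one)]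
  simp [Repr.single, dot_S_circ_one, Br.dot.one_mul, Br.circ.one_mul]

theorem act_dot_one (g : H) : Br.act g Br.dot.one = counit (R := R) g • Br.dot.one := by
  conv_lhs => rw [← Br.circ_one_eq_dot_one, Br.act_eq_sum (ℛ R g)]
  simp only [Br.circ.mul_one, Br.dot.sum_S_mul]

theorem circ_mul_dot_mul_eq_sum {x : H} (r : Repr R x ι) (u v : H) :
    Br.circ.mul x (Br.dot.mul u v) =
      ∑ i ∈ r.index, Br.dot.mul (Br.circ.mul (r.left i) u) (Br.act (r.right i) v) := by
  rw [Br.compat x u v r.uliftFin fun i => (ℛ R (r.uliftFin.right i)).uliftFin,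
    ← r.sum_uliftFin fun y z => Br.dot.mul (Br.circ.mul y u) (Br.act z v)]
  refine Finset.sum_congr rfl fun i _ => ?_
  rw [Br.act_eq_sum (ℛ R _), map_sum]
  simp only [Br.dot.mul_assoc]
  exact (ℛ R _).sum_uliftFin fun y z => Br.dot.mul _ (Br.dot.mul (Br.dot.S y) (Br.circ.mul z v))

theorem sum_dot_mul_act_eq_circ_mul {x : H} (r : Repr R x ι) (y : H) :
    ∑ i ∈ r.index, Br.dot.mul (r.left i) (Br.act (r.right i) y) = Br.circ.mul x y := by
  let T : H →ₗ[R] H →ₗ[R] H →ₗ[R] H := (LinearMap.llcomp R H H H).compl₁₂ Br.dot.mul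
    ((LinearMap.llcomp R H H H).flip (Br.circ.mul.flip y) ∘ₗ Br.dot.mul ∘ₗ Br.dot.S)
  calc ∑ i ∈ r.index, Br.dot.mul (r.left i) (Br.act (r.right i) y)
      = ∑ i ∈ r.index, ∑ j ∈ (ℛ R (r.right i)).index,
          T (r.left i) ((ℛ R (r.right i)).left j) ((ℛ R (r.right i)).right j) := by
        simp [T, Br.act_eq_sum (ℛ R (r.right _)), map_sum]
    _ = ∑ i ∈ r.index, ∑ j ∈ (ℛ R (r.left i)).index,
          T ((ℛ R (r.left i)).left j) ((ℛ R (r.left i)).right j) (r.right i) :=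
        (sum_sum_trilinear_eq T r _ _).symm
    _ = ∑ i ∈ r.index, counit (R := R) (r.left i) • Br.circ.mul (r.right i) y := by
        refine Finset.sum_congr rfl fun i _ => ?_
        simp only [T, LinearMap.compl₁₂_apply, LinearMap.llcomp_apply, LinearMap.coe_comp,
          Function.comp_apply, LinearMap.flip_apply, ← Br.dot.mul_assoc]
        rw [← LinearMap.sum_apply, ← map_sum, Br.dot.sum_mul_S, map_smul, LinearMap.smul_apply,
          Br.dot.one_mul]
    _ = Br.circ.mul x y := by
        simpa [map_sum] using congr(Br.circ.mul.flip y $(sum_counit_smul r))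

theorem act_dot_mul {g : H} (r : Repr R g ι) (h k : H) :
    Br.act g (Br.dot.mul h k) =
      ∑ i ∈ r.index, Br.dot.mul (Br.act (r.left i) h) (Br.act (r.right i) k) := by
  let T : H →ₗ[R] H →ₗ[R] H →ₗ[R] H :=
    ((Br.dot.mul ∘ₗ Br.dot.S).compl₂ (Br.circ.mul.flip h)).compr₂
      ((LinearMap.llcomp R H H H).flip (Br.act.flip k) ∘ₗ Br.dot.mul)
  calc Br.act g (Br.dot.mul h k)
      = ∑ i ∈ r.index, ∑ j ∈ (ℛ R (r.right i)).index,
          T (r.left i) ((ℛ R (r.right i)).left j) ((ℛ R (r.right i)).right j) := by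
        simp [T, Br.act_eq_sum r, Br.circ_mul_dot_mul_eq_sum (ℛ R (r.right _)), map_sum,
          Br.dot.mul_assoc]
    _ = ∑ i ∈ r.index, ∑ j ∈ (ℛ R (r.left i)).index,
          T ((ℛ R (r.left i)).left j) ((ℛ R (r.left i)).right j) (r.right i) :=
        (sum_sum_trilinear_eq T r _ _).symm
    _ = ∑ i ∈ r.index, Br.dot.mul (Br.act (r.left i) h) (Br.act (r.right i) k) := by
        simp [T, Br.act_eq_sum (ℛ R (r.left _)), map_sum]

theorem circ_mul_circ_mul_eq_sum {x y : H} {κ : Type*} (rx : Repr R x ι) (ry : Repr R y κ)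
    (ℓ : H) :
    Br.circ.mul x (Br.circ.mul y ℓ) = ∑ i ∈ rx.index, ∑ p ∈ ry.index,
      Br.dot.mul (Br.circ.mul (rx.left i) (ry.left p))
        (Br.act (rx.right i) (Br.act (ry.right p) ℓ)) := by
  simp_rw [← Br.sum_dot_mul_act_eq_circ_mul ry ℓ, map_sum, Br.circ_mul_dot_mul_eq_sum rx]
  exact Finset.sum_comm

theorem act_circ_mul (g h ℓ : H) : Br.act (Br.circ.mul g h) ℓ = Br.act g (Br.act h ℓ) := by
  let φ := Br.circ.mulCoalgHom
  let X : H ⊗[R] H →ₗ[R] H := TensorProduct.lift (Br.act.compl₂ (Br.act.flip ℓ))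
  let r := (ℛ R g).tensor (ℛ R h)
  let r₂ p : Repr R (r.right p) _ := (ℛ R ((ℛ R g).right p.1)).tensor (ℛ R ((ℛ R h).right p.2))
  calc Br.act (Br.circ.mul g h) ℓ
      = ∑ p ∈ r.index, Br.dot.mul (Br.dot.S (φ (r.left p))) (Br.circ.mul (φ (r.right p)) ℓ) :=
        Br.act_eq_sum (r.induced φ) ℓ
    _ = ∑ p ∈ r.index, Br.dot.mul (Br.dot.S (φ (r.left p)))
          (∑ q ∈ (r₂ p).index, Br.dot.mul (φ ((r₂ p).left q)) (X ((r₂ p).right q))) := by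
        refine Finset.sum_congr rfl fun p _ => ?_
        simp [φ, X, r, r₂, Br.circ.mul_assoc, Br.circ_mul_circ_mul_eq_sum (ℛ R _) (ℛ R _),
          Finset.sum_product]
    _ = Br.act g (Br.act h ℓ) := Br.dot.sum_S_mul_sum_mul_cancel φ X r r₂

end HopfBrace

/-- In a Hopf brace, `g⇀h := S(g₍₁₎)·(g₍₂₎∘h)` makes `H` a left module algebra over
`(H,∘)`: `1⇀h = h`, `g⇀(h⇀ℓ) = (g∘h)⇀ℓ`, `g⇀1 = ε(g)1` and
`g⇀(h·k) = (g₍₁₎⇀h)·(g₍₂₎⇀k)`. -/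
theorem hopfBrace_module_algebra (Br : HopfBrace R H) (act : H → H → H)
    (hact : ∀ (g h : H) {ι : Type*} (r : Coalgebra.Repr R g ι),
      act g h = ∑ i ∈ r.index,
        Br.dot.mul (Br.dot.S (r.left i)) (Br.circ.mul (r.right i) h)) :
    (∀ h : H, act Br.circ.one h = h) ∧
    (∀ g h ℓ : H, act g (act h ℓ) = act (Br.circ.mul g h) ℓ) ∧
    (∀ g : H, act g Br.dot.one = counit (R := R) g • Br.dot.one) ∧
    (∀ (g h k : H) {ι : Type*} (r : Coalgebra.Repr R g ι),
      act g (Br.dot.mul h k) =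
        ∑ i ∈ r.index, Br.dot.mul (act (r.left i) h) (act (r.right i) k)) := by
  obtain rfl : act = fun g h => Br.act g h :=
    funext₂ fun g h => (hact g h (ℛ R g).uliftFin).trans (Br.act_eq_sum _ h).symm
  exact ⟨Br.act_circ_one, fun g h ℓ => (Br.act_circ_mul g h ℓ).symm, Br.act_dot_one,
    fun g h k _ r => Br.act_dot_mul r h k⟩
end

section
/- Let (H, ▷) be a post-Hopf algebra. Then for all x, y ∈ H: (i) x▷1 = ε(x)1; (ii) 1▷x = x; (iii) S(x▷y) = x▷S(y), where S is the antipode of H. -/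
/-!
Give `H` the ring structure `(H, h.mul, h.one)` and work in the convolution algebras
`WithConv (C →ₗ[R] H)`. Precomposing `S * id = 1 = id * S` with a coalgebra map `g` shows that
every coalgebra map into `H` is a convolution unit, with inverse `S ∘ g`.

(i) `x ↦ x ▷ 1` is a coalgebra map, and it is convolution idempotent because
`x ▷ (1 · 1) = (x₁ ▷ 1)(x₂ ▷ 1)`; an idempotent unit is the unit `x ↦ ε(x) 1`.
(ii) `θ₁ = (1 ▷ ·)` is invertible in `End H` with inverse `ψ₁`, and idempotent since
`1 ▷ (1 ▷ y) = (1 · (1 ▷ 1)) ▷ y = 1 ▷ y` by (i); so `θ₁ = id`.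
(iii) `x ⊗ y ↦ x ▷ y` is a coalgebra map on `H ⊗ H`, so `S ∘ ▷` is its left convolution inverse.
Its right inverse is `x ⊗ y ↦ x ▷ S y`, since `(x₁ ▷ y₁)(x₂ ▷ S y₂) = x ▷ (y₁ S y₂) = ε(y) x ▷ 1`,
which is `ε(x) ε(y) 1` by (i). The two inverses agree.
-/

open scoped TensorProduct
open Coalgebra

variable (R H : Type*) [CommRing R] [AddCommGroup H] [Module R H] [Coalgebra R H]

/-- A post-Hopf algebra structure `▷ = tr` on the Hopf algebra `(H, h)`:
`tr` is a coalgebra map satisfying `x▷(y·z) = (x₍₁₎▷y)·(x₍₂₎▷z)` and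
`x▷(y▷z) = (x₍₁₎·(x₍₂₎▷y))▷z`, and `θ_x(y) = x▷y` is convolution invertible with
convolution inverse `ψ = inv`. -/
structure PostHopf (h : HopfMul R H) where
  tr : H →ₗ[R] H →ₗ[R] H
  inv : H →ₗ[R] H →ₗ[R] H
  comul_tr : ∀ (x y : H) {ι κ : Type*} (rx : Coalgebra.Repr R x ι) (ry : Coalgebra.Repr R y κ),
    comul (R := R) (tr x y) = ∑ i ∈ rx.index, ∑ j ∈ ry.index,
      tr (rx.left i) (ry.left j) ⊗ₜ[R] tr (rx.right i) (ry.right j)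
  counit_tr : ∀ x y : H,
    counit (R := R) (tr x y) = counit (R := R) x * counit (R := R) y
  tr_mul : ∀ (x y z : H) {ι : Type*} (r : Coalgebra.Repr R x ι),
    tr x (h.mul y z) = ∑ i ∈ r.index, h.mul (tr (r.left i) y) (tr (r.right i) z)
  tr_tr : ∀ (x y z : H) {ι : Type*} (r : Coalgebra.Repr R x ι),
    tr x (tr y z) = ∑ i ∈ r.index, tr (h.mul (r.left i) (tr (r.right i) y)) z
  inv_tr : ∀ (x y : H) {ι : Type*} (r : Coalgebra.Repr R x ι),
    ∑ i ∈ r.index, inv (r.left i) (tr (r.right i) y) = counit (R := R) x • y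
  tr_inv : ∀ (x y : H) {ι : Type*} (r : Coalgebra.Repr R x ι),
    ∑ i ∈ r.index, tr (r.left i) (inv (r.right i) y) = counit (R := R) x • y

open WithConv

universe w

/-- The axioms of `HopfMul` and `PostHopf` only apply to representations whose index type lives
in one fixed universe; `ULift (Fin n)` is available in every universe. -/
noncomputable def Coalgebra.Repr.uliftFin_s10 {R A : Type*} [CommSemiring R] [AddCommMonoid A]
    [Module R A] [CoalgebraStruct R A] (a : A) :
    Coalgebra.Repr R a (ULift.{w} (Fin (ℛ R a).index.card)) where
  index := Finset.univ
  left i := ((ℛ R a).index.equivFin.symm i.down).1.1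
  right i := ((ℛ R a).index.equivFin.symm i.down).1.2
  eq := by
    rw [← (ℛ R a).eq, ← Finset.sum_coe_sort (ℛ R a).index]
    exact Fintype.sum_equiv (Equiv.ulift.trans (ℛ R a).index.equivFin.symm) _ _ fun _ => rfl

section Convolution

variable {R A B C : Type*} [CommSemiring R] [Semiring A] [Algebra R A]
  [AddCommMonoid B] [Module R B] [Coalgebra R B] [AddCommMonoid C] [Module R C] [Coalgebra R C]

lemma LinearMap.convMul_comp_coalgHom_eq_one {f₁ f₂ : C →ₗ[R] A}
    (hf : toConv f₁ * toConv f₂ = 1) (g : B →ₗc[R] C) :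
    toConv (f₁ ∘ₗ g.toLinearMap) * toConv (f₂ ∘ₗ g.toLinearMap) = 1 := by
  apply ofConv_injective
  rw [← LinearMap.convMul_comp_coalgHom_distrib, hf]
  ext; simp

lemma LinearMap.isUnit_toConv_coalgHom [Coalgebra R A] {S : A →ₗ[R] A}
    (hSl : toConv S * toConv LinearMap.id = 1) (hSr : toConv LinearMap.id * toConv S = 1)
    (g : C →ₗc[R] A) : IsUnit (toConv g.toLinearMap) :=
  ⟨⟨toConv g.toLinearMap, toConv (S ∘ₗ g.toLinearMap), convMul_comp_coalgHom_eq_one hSr g,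
    convMul_comp_coalgHom_eq_one hSl g⟩, rfl⟩

lemma LinearMap.convMul_apply_tmul {ι κ : Type*} {b : B} {c : C}
    (rb : Coalgebra.Repr R b ι) (rc : Coalgebra.Repr R c κ) (f g : WithConv (B ⊗[R] C →ₗ[R] A)) :
    (f * g) (b ⊗ₜ c) = ∑ i ∈ rb.index, ∑ j ∈ rc.index,
      f (rb.left i ⊗ₜ rc.left j) * g (rb.right i ⊗ₜ rc.right j) := by
  simp only [convMul_apply, TensorProduct.comul_tmul, ← rb.eq, ← rc.eq, TensorProduct.tmul_sum,
    TensorProduct.sum_tmul, map_sum, TensorProduct.AlgebraTensorModule.tensorTensorTensorComm_tmul,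
    TensorProduct.map_tmul, mul'_apply]
  exact Finset.sum_comm

end Convolution

namespace HopfMul

variable {R H} (h : HopfMul R H)

abbrev toRing : Ring H :=
  { ‹AddCommGroup H› with
    mul := fun a b => h.mul a b
    one := h.one
    mul_assoc := h.mul_assoc
    one_mul := h.one_mul
    mul_one := h.mul_one
    left_distrib := fun a b c => map_add (h.mul a) b c
    right_distrib := fun a b c => LinearMap.map_add₂ h.mul a b c
    zero_mul := fun a => LinearMap.map_zero₂ h.mul a
    mul_zero := fun a => map_zero (h.mul a) }

abbrev toAlgebra : letI := h.toRing; Algebra R H :=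
  letI := h.toRing
  Algebra.ofModule (fun r x y => LinearMap.map_smul₂ h.mul r x y)
    (fun r x y => map_smul (h.mul x) r y)

lemma antipode_convMul_id :
    letI := h.toRing; letI := h.toAlgebra
    toConv h.S * toConv LinearMap.id = 1 := by
  let := h.toRing; let := h.toAlgebra
  ext a
  rw [(Repr.uliftFin_s10 a).convMul_apply]
  exact (h.S_mul_left a _).trans (Algebra.algebraMap_eq_smul_one _).symm

lemma id_convMul_antipode :
    letI := h.toRing; letI := h.toAlgebra
    toConv LinearMap.id * toConv h.S = 1 := by
  let := h.toRing; let := h.toAlgebra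
  ext a
  rw [(Repr.uliftFin_s10 a).convMul_apply]
  exact (h.S_mul_right a _).trans (Algebra.algebraMap_eq_smul_one _).symm

@[simps]
noncomputable def oneRepr : Coalgebra.Repr R h.one PUnit where
  index := {PUnit.unit}
  left _ := h.one
  right _ := h.one
  eq := by simpa using h.comul_one.symm

end HopfMul

namespace PostHopf

variable {R H} {h : HopfMul R H} (P : PostHopf R H h)

noncomputable def trCoalgHom : H ⊗[R] H →ₗc[R] H where
  toLinearMap := TensorProduct.lift P.tr
  counit_comp := TensorProduct.ext' fun x y => by
    simp only [LinearMap.comp_apply, TensorProduct.lift.tmul, TensorProduct.counit_tmul]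
    rw [P.counit_tr, smul_eq_mul, mul_comm]
  map_comp_comul := TensorProduct.ext' fun x y => by
    let rx := Repr.uliftFin_s10 (R := R) x
    let ry := Repr.uliftFin_s10 (R := R) y
    simp only [LinearMap.comp_apply, TensorProduct.lift.tmul, TensorProduct.comul_tmul]
    rw [P.comul_tr x y rx ry, ← rx.eq, ← ry.eq]
    simp [TensorProduct.sum_tmul, TensorProduct.tmul_sum, Finset.sum_comm (s := ry.index)]

noncomputable def trOneCoalgHom : H →ₗc[R] H where
  toLinearMap := P.tr.flip h.one
  counit_comp := LinearMap.ext fun x => by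
    simp only [LinearMap.comp_apply, LinearMap.flip_apply]
    rw [P.counit_tr, h.counit_one, mul_one]
  map_comp_comul := LinearMap.ext fun x => by
    let r := Repr.uliftFin_s10 (R := R) x
    simp only [LinearMap.comp_apply, LinearMap.flip_apply]
    rw [P.comul_tr x h.one r h.oneRepr, ← r.eq]
    simp

lemma isIdempotentElem_trOneCoalgHom :
    letI := h.toRing; letI := h.toAlgebra
    IsIdempotentElem (toConv P.trOneCoalgHom.toLinearMap) := by
  let := h.toRing; let := h.toAlgebra
  ext x
  let r := Repr.uliftFin_s10 (R := R) x
  rw [r.convMul_apply]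
  exact (P.tr_mul x h.one h.one r).symm.trans (by rw [h.one_mul]; rfl)

theorem tr_one (x : H) : P.tr x h.one = counit (R := R) x • h.one := by
  let := h.toRing; let := h.toAlgebra
  have hunit := LinearMap.isUnit_toConv_coalgHom h.antipode_convMul_id h.id_convMul_antipode
    P.trOneCoalgHom
  have hone := (IsIdempotentElem.iff_eq_one_of_isUnit hunit).1 P.isIdempotentElem_trOneCoalgHom
  have hx := congr(ofConv $hone x)
  rwa [LinearMap.convOne_apply, Algebra.algebraMap_eq_smul_one] at hx

theorem one_tr (x : H) : P.tr h.one x = x := by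
  have hl : P.inv h.one * P.tr h.one = 1 := LinearMap.ext fun y => by
    simpa [h.counit_one] using P.inv_tr h.one y h.oneRepr
  have hr : P.tr h.one * P.inv h.one = 1 := LinearMap.ext fun y => by
    simpa [h.counit_one] using P.tr_inv h.one y h.oneRepr
  have hidem : IsIdempotentElem (P.tr h.one) := LinearMap.ext fun y => by
    simpa [P.tr_one, h.counit_one, h.mul_one] using P.tr_tr h.one h.one y h.oneRepr
  have hone := (IsIdempotentElem.iff_eq_one_of_isUnit ⟨⟨_, _, hr, hl⟩, rfl⟩).1 hidem
  exact congr($hone x)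

lemma trCoalgHom_convMul_lift_compl₂_antipode :
    letI := h.toRing; letI := h.toAlgebra
    toConv P.trCoalgHom.toLinearMap * toConv (TensorProduct.lift (P.tr.compl₂ h.S)) = 1 := by
  let := h.toRing; let := h.toAlgebra
  apply ofConv_injective
  refine TensorProduct.ext' fun x y => ?_
  let rx := Repr.uliftFin_s10 (R := R) x
  let ry := Repr.uliftFin_s10 (R := R) y
  rw [LinearMap.convMul_apply_tmul rx ry]
  calc ∑ i ∈ rx.index, ∑ j ∈ ry.index,
        h.mul (P.tr (rx.left i) (ry.left j)) (P.tr (rx.right i) (h.S (ry.right j)))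
      = ∑ j ∈ ry.index, P.tr x (h.mul (ry.left j) (h.S (ry.right j))) := by
        rw [Finset.sum_comm]
        exact Finset.sum_congr rfl fun j _ => (P.tr_mul x _ _ rx).symm
    _ = P.tr x (counit (R := R) y • h.one) := by rw [← map_sum, h.S_mul_right y ry]
    _ = (counit (R := R) y * counit (R := R) x) • h.one := by rw [map_smul, P.tr_one, smul_smul]
    _ = _ := by
        rw [LinearMap.convOne_apply, TensorProduct.counit_tmul, smul_eq_mul,
          Algebra.algebraMap_eq_smul_one]
        rfl

theorem antipode_tr (x y : H) : h.S (P.tr x y) = P.tr x (h.S y) := by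
  let := h.toRing; let := h.toAlgebra
  have hinv := left_inv_eq_right_inv
    (LinearMap.convMul_comp_coalgHom_eq_one h.antipode_convMul_id P.trCoalgHom)
    P.trCoalgHom_convMul_lift_compl₂_antipode
  exact congr(ofConv $hinv (x ⊗ₜ y))

end PostHopf

/-- In a post-Hopf algebra `(H,▷)`: `x▷1 = ε(x)1`, `1▷x = x` and `S(x▷y) = x▷S(y)`. -/
theorem postHopf_basic (h : HopfMul R H) (P : PostHopf R H h) :
    (∀ x : H, P.tr x h.one = counit (R := R) x • h.one) ∧
    (∀ x : H, P.tr h.one x = x) ∧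
    (∀ x y : H, h.S (P.tr x y) = P.tr x (h.S y)) :=
  ⟨P.tr_one, P.one_tr, P.antipode_tr⟩
end
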